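/- arXiv:1512.04818 — 2 statements merged into one kernel-verified Lean document; each statement's English description precedes it below -/
import Mathlib

section
/- Every F_q-linear (h-1)-club of rank h in PG(1, q^h) that is disjoint from the point (0,1) and has head (1,0) is, up to the action of PGL(2, q^h), equal to the set {(x, Tr(x)) : x ∈ F_{q^h}, x ≠ 0}, where Tr is the relative trace from F_{q^h} to F_q. More precisely, such a club equals {(x, Tr(αx)) : x ∈ F_{q^h}^*} for some α ∈ F_{q^h}^*, and the diagonal map (x,y) ↦ (αx, y) carries it to {(x, Tr(x)) : x ∈ F_{q^h}^*}. -/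
/-!
Since `(0,1)` is not a point of the linear set, the first projection is injective on `W`, so
by a dimension count `W` is the graph of a `K`-linear map `f : L → L`. The head `(1,0)` having
weight `h - 1` says that `ker f` has dimension `h - 1`, so `f` has rank one: `f x = g x • b`
for a functional `g`, and nondegeneracy of the trace form writes `g = Tr (β * ·)`. Dividing the
second coordinate by `b` and substituting `x = b y` gives the points `(y, Tr (β b y))`.
-/

open Projectivization Module

noncomputable def weightOf (K L : Type*) [Field K] [Field L] [Algebra K L]
    (W : Submodule K (L × L)) (P : Projectivization L (L × L)) : ℕ :=
  Module.finrank K (W ⊓ (P.submodule.restrictScalars K) : Submodule K (L × L))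

def linearSetOf (K L : Type*) [Field K] [Field L] [Algebra K L]
    (W : Submodule K (L × L)) : Set (Projectivization L (L × L)) :=
  {P | ∃ v : L × L, ∃ hv : v ≠ 0, v ∈ W ∧ P = Projectivization.mk L v hv}

section

variable {K V V' : Type*} [Field K] [AddCommGroup V] [Module K V] [AddCommGroup V'] [Module K V']

theorem Submodule.exists_eq_graph_of_finrank_eq [FiniteDimensional K V]
    (W : Submodule K (V × V')) (hW : finrank K W = finrank K V)
    (hdisj : ∀ y, ((0 : V), y) ∈ W → y = 0) :
    ∃ f : V →ₗ[K] V', W = f.graph := by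
  set π : W →ₗ[K] V := (LinearMap.fst K V V').comp W.subtype
  have hinj : Function.Injective π := by
    rw [← LinearMap.ker_eq_bot, LinearMap.ker_eq_bot']
    rintro ⟨⟨x, y⟩, hw⟩ (rfl : x = 0)
    simp [hdisj y hw]
  have : FiniteDimensional K W := Module.Finite.of_injective π hinj
  let e := LinearEquiv.ofBijective π
    ⟨hinj, (LinearMap.injective_iff_surjective_of_finrank_eq_finrank hW).mp hinj⟩
  refine ⟨(LinearMap.snd K V V').comp (W.subtype.comp e.symm.toLinearMap), ?_⟩
  ext ⟨x, y⟩
  rw [LinearMap.mem_graph_iff]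
  constructor
  · intro hw
    have : e.symm x = ⟨(x, y), hw⟩ := e.symm_apply_eq.mpr rfl
    simp [this]
  · intro hy
    have hx : ((e.symm x : W) : V × V').1 = x := e.apply_symm_apply x
    rw [show (x, y) = (e.symm x : V × V') from Prod.ext hx.symm hy]
    exact (e.symm x).2

theorem LinearMap.exists_eq_smulRight_of_finrank_range_eq_one (f : V →ₗ[K] V')
    (hf : finrank K (range f) = 1) :
    ∃ (g : V →ₗ[K] K) (b : V'), b ≠ 0 ∧ f = g.smulRight b := by
  let B := Module.basisUnique Unit hf
  refine ⟨(B.coord ()).comp f.rangeRestrict, B (), by simpa using B.ne_zero (), ?_⟩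
  ext x
  simpa using congrArg Subtype.val (B.sum_repr (f.rangeRestrict x)).symm

end

theorem Algebra.exists_trace_mul_eq {K L : Type*} [Field K] [Field L] [Algebra K L]
    [FiniteDimensional K L] [Algebra.IsSeparable K L] (g : L →ₗ[K] K) :
    ∃ α : L, ∀ x, Algebra.trace K L (α * x) = g x :=
  ⟨((traceForm K L).toDual (traceForm_nondegenerate K L)).symm g,
    LinearMap.BilinForm.apply_toDual_symm_apply (hB := traceForm_nondegenerate K L) g⟩

section

variable {L : Type*} [Field L]

def graphPoints (F : L → L) : Set (Projectivization L (L × L)) :=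
  {P | ∃ x : L, ∃ hx : x ≠ 0, P = mk L (x, F x) fun h => hx (congrArg Prod.fst h)}

theorem graphPoints_mul_const (F : L → L) {b : L} (hb : b ≠ 0) :
    graphPoints (fun x => F x * b) = graphPoints (fun y => F (b * y)) := by
  ext P
  constructor
  · rintro ⟨x, hx, rfl⟩
    refine ⟨b⁻¹ * x, by simp [hb, hx], (mk_eq_mk_iff' _ _ _ _ _).mpr ⟨b, ?_⟩⟩
    simpa [hb] using mul_comm _ _
  · rintro ⟨y, hy, rfl⟩
    refine ⟨b * y, by simp [hb, hy], (mk_eq_mk_iff' _ _ _ _ _).mpr ⟨b⁻¹, ?_⟩⟩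
    simp [hb, mul_comm]

theorem image_map_graphPoints_comp_mul (F : L → L) {α : L} (hα : α ≠ 0)
    (e : (L × L) ≃ₗ[L] (L × L)) (he : ∀ v, e v = (α * v.1, v.2)) :
    Projectivization.map e.toLinearMap e.injective '' graphPoints (fun x => F (α * x)) =
      graphPoints F := by
  ext P
  constructor
  · rintro ⟨_, ⟨x, hx, rfl⟩, rfl⟩
    exact ⟨α * x, mul_ne_zero hα hx, by simp only [map_mk, LinearEquiv.coe_coe, he]⟩
  · rintro ⟨y, hy, rfl⟩
    refine ⟨_, ⟨α⁻¹ * y, by simp [hα, hy], rfl⟩, ?_⟩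
    simp only [map_mk, LinearEquiv.coe_coe, he, mul_inv_cancel_left₀ hα]

end

section

variable {K L : Type*} [Field K] [Field L] [Algebra K L]

theorem linearSetOf_graph (f : L →ₗ[K] L) : linearSetOf K L f.graph = graphPoints f := by
  ext P
  constructor
  · rintro ⟨⟨x, y⟩, hv, hvW, rfl⟩
    obtain rfl : y = f x := hvW
    exact ⟨x, fun hx => hv (by simp [hx]), rfl⟩
  · rintro ⟨x, hx, rfl⟩
    exact ⟨_, _, (f.mem_graph_iff _).mpr rfl, rfl⟩

theorem weightOf_graph_mk_one_zero (f : L →ₗ[K] L) :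
    weightOf K L f.graph (mk L (1, 0) (by simp)) = finrank K (LinearMap.ker f) := by
  have : f.graph ⊓ (mk L ((1 : L), (0 : L)) (by simp)).submodule.restrictScalars K =
      (LinearMap.ker f).map (LinearMap.inl K L L) := by
    ext ⟨x, y⟩
    simp [submodule_mk, Submodule.mem_span_singleton, Prod.ext_iff]
    grind
  rw [weightOf, this]
  exact (Submodule.equivMapOfInjective _ LinearMap.inl_injective _).finrank_eq.symm

theorem eq_zero_of_mem_of_mk_zero_one_notMem {W : Submodule K (L × L)}
    (hW : mk L ((0 : L), (1 : L)) (by simp) ∉ linearSetOf K L W) (y : L) (hy : (0, y) ∈ W) :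
    y = 0 := by
  by_contra hy0
  refine hW ⟨(0, y), by simp [hy0], hy, (mk_eq_mk_iff' _ _ _ _ _).mpr ⟨y⁻¹, by simp [hy0]⟩⟩

end

/-- every `F_q`-linear `(h-1)`-club of rank `h` in `PG(1, q^h)` with head
`(1,0)` and disjoint from `(0,1)` equals `{(x, Tr (α x)) : x ≠ 0}` for some `α ≠ 0`, and
the diagonal map `(x, y) ↦ (α x, y)` carries it to `{(x, Tr x) : x ≠ 0}`. -/
theorem stmt4 (K L : Type*) [Field K] [Field L] [Algebra K L] [Fintype K] [Fintype L]
    (h : ℕ) (hrank : Module.finrank K L = h)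
    (W : Submodule K (L × L)) (hWrank : Module.finrank K W = h)
    (hhead : weightOf K L W (Projectivization.mk L ((1 : L), (0 : L)) (by simp)) = h - 1)
    (hdisj : Projectivization.mk L ((0 : L), (1 : L)) (by simp) ∉ linearSetOf K L W) :
    ∃ α : L, ∃ hα : α ≠ 0,
      linearSetOf K L W =
        {P | ∃ x : L, ∃ hx : x ≠ 0,
          P = Projectivization.mk L (x, algebraMap K L (Algebra.trace K L (α * x)))
            (by simp [Prod.ext_iff, hx])} ∧
      ∃ e : (L × L) ≃ₗ[L] (L × L), (∀ v : L × L, e v = (α * v.1, v.2)) ∧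
        Projectivization.map e.toLinearMap e.injective '' linearSetOf K L W =
          {P | ∃ x : L, ∃ hx : x ≠ 0,
            P = Projectivization.mk L (x, algebraMap K L (Algebra.trace K L x))
              (by simp [Prod.ext_iff, hx])} := by
  obtain ⟨f, rfl⟩ := W.exists_eq_graph_of_finrank_eq (hWrank.trans hrank.symm)
    (eq_zero_of_mem_of_mk_zero_one_notMem hdisj)
  rw [weightOf_graph_mk_one_zero] at hhead
  have hrange : finrank K (LinearMap.range f) = 1 := by
    have hsum := f.finrank_range_add_finrank_ker
    have hpos := finrank_pos (R := K) (M := L)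
    omega
  obtain ⟨g, b, hb, rfl⟩ := f.exists_eq_smulRight_of_finrank_range_eq_one hrange
  obtain ⟨β, hgβ⟩ := Algebra.exists_trace_mul_eq g
  have hβ : β ≠ 0 := by
    rintro rfl
    have hg : g = 0 := LinearMap.ext fun x => by
      rw [LinearMap.zero_apply, ← hgβ x, zero_mul, map_zero]
    rw [hg, LinearMap.zero_smulRight, LinearMap.range_zero, finrank_bot] at hrange
    exact zero_ne_one hrange
  have hα : β * b ≠ 0 := mul_ne_zero hβ hb
  have hset : linearSetOf K L (g.smulRight b).graph =
      graphPoints fun x => algebraMap K L (Algebra.trace K L (β * b * x)) := by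
    simp_rw [mul_assoc β b]
    rw [← graphPoints_mul_const (fun x => algebraMap K L (Algebra.trace K L (β * x))) hb,
      linearSetOf_graph]
    congr 1
    ext x
    simp [hgβ, Algebra.smul_def]
  refine ⟨β * b, hα, hset,
    (LinearEquiv.smulOfNeZero L L _ hα).prodCongr (LinearEquiv.refl L L), fun v => rfl, ?_⟩
  rw [hset]
  exact image_map_graphPoints_comp_mul (fun x => algebraMap K L (Algebra.trace K L x)) hα _
    fun _ => rfl
end

section
/- Let q be a prime power, h ≥ 3, and λ ∈ F_{q^h} a generator of F_{q^h} over F_q (so that 1, λ, ..., λ^{h-1} is an F_q-basis). The set C = {(t₁λ + t₂λ² + ... + t_{h-1}λ^{h-1}, t_{h-1} + t_h λ) : t_i ∈ F_q, (t₁,...,t_h) ≠ 0} ⊆ PG(1, q^h) is an F_q-linear set of rank h in which the point (1,0) has weight h-2 and all other points have weight 1; consequently |C| = q^{h-1} + q^{h-2} + 1. -/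
/-!
Indexing `t` from `0`, write its vector as `(λ F_t(λ), W_t(λ))`, where
`F_t = t₀ + t₁X + ⋯ + t_{h-2}X^{h-2}` and `W_t = t_{h-2} + t_{h-1}X`; the constant term of `W_t`
is the top coefficient of `F_t`. Since `λ` is a root of no nonzero polynomial of degree `< h`,
two such vectors are proportional over `F_{q^h}` exactly when `F_s W_t = F_t W_s` in `F_q[X]`.
Comparing the coefficients of `X^{h-1}` makes `(s_{h-2}, s_{h-1})` proportional to
`(t_{h-2}, t_{h-1})`, after which `W_t` cancels: if `W_t ≠ 0` then `s ∈ F_q t`, so every point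
other than `(1,0)` has weight `1`. The vectors on `(1,0)` are those with `W_t = 0`, a subspace
of dimension `h - 2`. Hence `C` is `PG(h-1, q)` with the subspace `PG(h-3, q)` collapsed to the
single point `(1,0)`, and `|C| = θ_{h-1} - θ_{h-3} + 1 = q^{h-1} + q^{h-2} + 1`.
-/

open Projectivization Module

open Polynomial
open scoped LinearAlgebra.Projectivization

section Polynomial

variable {K : Type*} [Field K]

theorem exists_eq_mul_of_mul_eq_mul {a b c d : K} (hab : a ≠ 0 ∨ b ≠ 0) (h : c * b = a * d) :
    ∃ μ : K, c = μ * a ∧ d = μ * b := by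
  rcases hab with ha | hb
  · exact ⟨c / a, by field_simp, by field_simp; linear_combination -h⟩
  · exact ⟨d / b, by field_simp; linear_combination h, by field_simp⟩

theorem Polynomial.exists_eq_C_mul_of_mul_linear_eq {n : ℕ} {F G : K[X]} {a b : K}
    (hF : F.natDegree ≤ n) (hG : G.natDegree ≤ n) (hw : C (F.coeff n) + C a * X ≠ 0)
    (hFG : G * (C (F.coeff n) + C a * X) = F * (C (G.coeff n) + C b * X)) :
    ∃ μ : K, G = C μ * F ∧ b = μ * a := by
  have hlead : G.coeff n * a = F.coeff n * b := by
    simpa [mul_add, ← mul_assoc, coeff_mul_X, coeff_mul_C,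
      coeff_eq_zero_of_natDegree_lt (Nat.lt_succ_of_le hF),
      coeff_eq_zero_of_natDegree_lt (Nat.lt_succ_of_le hG)] using congrArg (coeff · (n + 1)) hFG
  have hFa : F.coeff n ≠ 0 ∨ a ≠ 0 := by
    by_contra! h0
    exact hw (by simp [h0.1, h0.2])
  obtain ⟨μ, hGn, hb⟩ := exists_eq_mul_of_mul_eq_mul hFa hlead
  have hwG : C (G.coeff n) + C b * X = C μ * (C (F.coeff n) + C a * X) := by
    rw [hGn, hb, C_mul, C_mul]; ring
  refine ⟨μ, mul_right_cancel₀ hw ?_, hb⟩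
  rw [hFG, hwG]; ring

theorem Polynomial.eq_zero_of_aeval_eq_zero_of_natDegree_lt {L : Type*} [Field L] [Algebra K L]
    {lam : L} {p : K[X]} (hp : p.natDegree < (minpoly K lam).natDegree)
    (h0 : aeval lam p = 0) : p = 0 := by
  by_contra hne
  exact hp.not_ge (natDegree_le_natDegree (minpoly.degree_le_of_ne_zero K lam hne h0))

end Polynomial

section LinearSet

variable {K L V : Type*} [Field K] [Field L] [Algebra K L] [AddCommGroup V] [Module K V]

theorem mem_span_one_zero_iff (x : L × L) :
    x ∈ L ∙ ((1 : L), (0 : L)) ↔ x.2 = 0 := by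
  rw [Submodule.mem_span_singleton]
  refine ⟨?_, fun h => ⟨x.1, Prod.ext (mul_one _) (by simp [h])⟩⟩
  rintro ⟨a, rfl⟩
  simp

noncomputable def projMap (f : V →ₗ[K] L × L) (hf : Function.Injective f) :
    ℙ K V → ℙ L (L × L) :=
  Projectivization.map (σ := algebraMap K L)
    { f.toAddHom with map_smul' := fun c x => by simp [algebraMap_smul] } hf

theorem projMap_mk (f : V →ₗ[K] L × L) (hf : Function.Injective f) (x : V) (hx : x ≠ 0) :
    projMap f hf (mk K x hx) = mk L (f x) ((map_ne_zero_iff f hf).mpr hx) :=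
  rfl

theorem mem_range_projMap_iff (f : V →ₗ[K] L × L) (hf : Function.Injective f)
    (P : ℙ L (L × L)) :
    P ∈ Set.range (projMap f hf) ↔ ∃ x : V, ∃ hx : f x ≠ 0, P = mk L (f x) hx := by
  constructor
  · rintro ⟨p, rfl⟩
    induction p using Projectivization.ind with
    | h x hx => exact ⟨x, _, projMap_mk f hf x hx⟩
  · rintro ⟨x, hx, rfl⟩
    exact ⟨mk K x fun h0 => hx (by rw [h0, map_zero]), rfl⟩

theorem linearSetOf_range (f : V →ₗ[K] L × L) (hf : Function.Injective f) :
    linearSetOf K L (LinearMap.range f) = Set.range (projMap f hf) := by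
  ext P
  rw [mem_range_projMap_iff]
  constructor
  · rintro ⟨_, hx, ⟨x, rfl⟩, rfl⟩
    exact ⟨x, hx, rfl⟩
  · rintro ⟨x, hx, rfl⟩
    exact ⟨f x, hx, ⟨x, rfl⟩, rfl⟩

theorem weightOf_range (f : V →ₗ[K] L × L) (hf : Function.Injective f) (P : ℙ L (L × L)) :
    weightOf K L (LinearMap.range f) P =
      finrank K (Submodule.comap f (P.submodule.restrictScalars K)) := by
  rw [weightOf, ← Submodule.map_comap_eq]
  exact (Submodule.equivMapOfInjective f hf _).finrank_eq.symm

theorem mk_eq_mk_one_zero_iff (x : L × L) (hx : x ≠ 0) :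
    mk L x hx = mk L ((1 : L), (0 : L)) (by simp) ↔ x.2 = 0 := by
  rw [mk_eq_mk_iff', ← Submodule.mem_span_singleton, mem_span_one_zero_iff]

def pointsOf (U : Submodule K V) : Set (ℙ K V) :=
  Set.range (Projectivization.map U.subtype U.injective_subtype)

theorem mk_mem_pointsOf_iff (U : Submodule K V) (x : V) (hx : x ≠ 0) :
    mk K x hx ∈ pointsOf U ↔ x ∈ U := by
  constructor
  · rintro ⟨p, hp⟩
    induction p using Projectivization.ind with
    | h u hu =>
      obtain ⟨a, rfl⟩ := (mk_eq_mk_iff' K _ _ hx _).mp hp.symm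
      exact U.smul_mem a u.2
  · intro hxU
    exact ⟨mk K ⟨x, hxU⟩ fun h0 => hx (congrArg Subtype.val h0), rfl⟩

theorem ncard_compl_pointsOf_add_card [Finite V] (U : Submodule K V) :
    (pointsOf U)ᶜ.ncard + Nat.card (ℙ K U) = Nat.card (ℙ K V) := by
  rw [← Set.ncard_range_of_injective (Projectivization.map_injective (τ := RingHom.id K)
    U.subtype U.injective_subtype), add_comm, pointsOf, Set.ncard_add_ncard_compl]

end LinearSet

section ClubMap

variable {K L : Type*} [Field K] [Field L] [Algebra K L] {n : ℕ}

noncomputable def lowPoly : (Fin (n + 2) → K) →ₗ[K] K[X] :=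
  ∑ i : Fin (n + 1), monomial i ∘ₗ LinearMap.proj i.castSucc

noncomputable def linPoly : (Fin (n + 2) → K) →ₗ[K] K[X] :=
  monomial 0 ∘ₗ LinearMap.proj (Fin.last n).castSucc +
    monomial 1 ∘ₗ LinearMap.proj (Fin.last (n + 1))

variable (K n) in
def lastTwo : (Fin (n + 2) → K) →ₗ[K] K × K :=
  (LinearMap.proj (Fin.last n).castSucc).prod (LinearMap.proj (Fin.last (n + 1)))

theorem lastTwo_apply (t : Fin (n + 2) → K) :
    lastTwo K n t = (t (Fin.last n).castSucc, t (Fin.last (n + 1))) :=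
  rfl

theorem lowPoly_apply (t : Fin (n + 2) → K) :
    lowPoly t = ∑ i : Fin (n + 1), monomial i (t i.castSucc) := by
  simp [lowPoly]

theorem coeff_lowPoly (t : Fin (n + 2) → K) (i : Fin (n + 1)) :
    (lowPoly t).coeff i = t i.castSucc := by
  simp [lowPoly_apply, coeff_monomial, Fin.val_inj]

theorem coeff_lowPoly_last (t : Fin (n + 2) → K) :
    (lowPoly t).coeff n = t (Fin.last n).castSucc := by
  simpa using coeff_lowPoly t (Fin.last n)

theorem natDegree_lowPoly_le (t : Fin (n + 2) → K) : (lowPoly t).natDegree ≤ n := by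
  rw [lowPoly_apply]
  exact natDegree_sum_le_of_forall_le _ _ fun i _ =>
    (natDegree_monomial_le _).trans (Nat.lt_succ_iff.mp i.isLt)

theorem linPoly_apply (t : Fin (n + 2) → K) :
    linPoly t = C ((lowPoly t).coeff n) + C (t (Fin.last (n + 1))) * X := by
  rw [coeff_lowPoly_last, C_mul_X_eq_monomial, ← monomial_zero_left]
  rfl

theorem natDegree_linPoly_le (t : Fin (n + 2) → K) : (linPoly t).natDegree ≤ 1 := by
  rw [linPoly_apply, add_comm]
  exact natDegree_linear_le

theorem linPoly_eq_zero_iff (t : Fin (n + 2) → K) : linPoly t = 0 ↔ lastTwo K n t = 0 := by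
  rw [linPoly_apply, coeff_lowPoly_last, lastTwo_apply, Prod.mk_eq_zero]
  refine ⟨fun h0 => ⟨by simpa using congrArg (coeff · 0) h0,
    by simpa using congrArg (coeff · 1) h0⟩, fun ⟨h₀, h₁⟩ => by simp [h₀, h₁]⟩

theorem finrank_ker_lastTwo :
    finrank K (LinearMap.ker (lastTwo K n)) = n := by
  have hsurj : LinearMap.range (lastTwo K n) = ⊤ :=
    LinearMap.range_eq_top.mpr fun ⟨a, c⟩ => ⟨Fin.snoc (Fin.snoc (0 : Fin n → K) a) c, by
      simp [lastTwo_apply]⟩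
  have := LinearMap.finrank_range_add_finrank_ker (lastTwo K n)
  rw [hsurj, finrank_top, finrank_prod, finrank_self, finrank_fin_fun] at this
  omega

theorem eq_of_lowPoly_eq {s t : Fin (n + 2) → K} (hlow : lowPoly s = lowPoly t)
    (hlast : s (Fin.last (n + 1)) = t (Fin.last (n + 1))) : s = t := by
  funext i
  induction i using Fin.lastCases with
  | last => exact hlast
  | cast i => rw [← coeff_lowPoly s, ← coeff_lowPoly t, hlow]

variable (K n) in
/-- The paper's vector `(t₁λ + ⋯ + t_{h-1}λ^{h-1}, t_{h-1} + t_h λ)`, with `h = n + 2` and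
indices shifted to start at `0`. -/
noncomputable def clubMap (lam : L) : (Fin (n + 2) → K) →ₗ[K] L × L :=
  (LinearMap.mulLeft K lam ∘ₗ (aeval lam).toLinearMap ∘ₗ lowPoly).prod
    ((aeval lam).toLinearMap ∘ₗ linPoly)

theorem clubMap_apply (lam : L) (t : Fin (n + 2) → K) :
    clubMap K n lam t = (lam * aeval lam (lowPoly t), aeval lam (linPoly t)) :=
  rfl

theorem clubMap_apply_eq_sum (lam : L) (t : Fin (n + 2) → K) :
    clubMap K n lam t = (∑ i : Fin (n + 1), algebraMap K L (t i.castSucc) * lam ^ ((i : ℕ) + 1),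
      algebraMap K L (t (Fin.last n).castSucc) + algebraMap K L (t (Fin.last (n + 1))) * lam) := by
  rw [clubMap_apply, lowPoly_apply, linPoly_apply, coeff_lowPoly_last]
  simp [Finset.mul_sum, pow_succ', mul_left_comm]

end ClubMap

section Club

variable {K L : Type*} [Field K] [Field L] [Algebra K L] {n : ℕ} {lam : L}

theorem ne_zero_of_two_le_natDegree_minpoly (hdeg : 2 ≤ (minpoly K lam).natDegree) :
    lam ≠ 0 := by
  rintro rfl
  simp [minpoly.zero] at hdeg

theorem clubMap_snd_eq_zero_iff (hdeg : n + 2 ≤ (minpoly K lam).natDegree)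
    (t : Fin (n + 2) → K) : (clubMap K n lam t).2 = 0 ↔ lastTwo K n t = 0 := by
  rw [← linPoly_eq_zero_iff, clubMap_apply]
  refine ⟨eq_zero_of_aeval_eq_zero_of_natDegree_lt ?_, fun h0 => by rw [h0, map_zero]⟩
  linarith [natDegree_linPoly_le t]

theorem clubMap_injective (hdeg : n + 2 ≤ (minpoly K lam).natDegree) :
    Function.Injective (clubMap K n lam) := by
  refine (injective_iff_map_eq_zero _).mpr fun t ht => ?_
  have hlin : lastTwo K n t = 0 := (clubMap_snd_eq_zero_iff hdeg t).mp (by rw [ht]; rfl)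
  have hlow : lowPoly t = 0 := by
    have h1 : lam * aeval lam (lowPoly t) = 0 := congrArg Prod.fst ht
    refine eq_zero_of_aeval_eq_zero_of_natDegree_lt ?_
      ((mul_eq_zero.mp h1).resolve_left (ne_zero_of_two_le_natDegree_minpoly (K := K) (by omega)))
    linarith [natDegree_lowPoly_le t]
  exact eq_of_lowPoly_eq (hlow.trans (map_zero _).symm) (congrArg Prod.snd hlin)

theorem exists_eq_smul_of_clubMap_eq_smul (hdeg : n + 2 ≤ (minpoly K lam).natDegree)
    {s t : Fin (n + 2) → K} (ht : lastTwo K n t ≠ 0) {c : L}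
    (hc : clubMap K n lam s = c • clubMap K n lam t) : ∃ μ : K, s = μ • t := by
  simp only [clubMap_apply, Prod.smul_mk, Prod.mk.injEq, smul_eq_mul] at hc
  have hlam := ne_zero_of_two_le_natDegree_minpoly (K := K) (lam := lam) (by omega)
  have hcross : aeval lam (lowPoly s * linPoly t - lowPoly t * linPoly s) = 0 := by
    have h1 : aeval lam (lowPoly s) = c * aeval lam (lowPoly t) :=
      mul_left_cancel₀ hlam (by rw [hc.1]; ring)
    rw [map_sub, map_mul, map_mul, h1, hc.2]
    ring
  have hpoly : lowPoly s * linPoly t = lowPoly t * linPoly s := by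
    refine sub_eq_zero.mp (eq_zero_of_aeval_eq_zero_of_natDegree_lt ?_ hcross)
    have := natDegree_sub_le_of_le (natDegree_mul_le_of_le (natDegree_lowPoly_le s)
      (natDegree_linPoly_le t)) (natDegree_mul_le_of_le (natDegree_lowPoly_le t)
      (natDegree_linPoly_le s))
    omega
  rw [linPoly_apply, linPoly_apply] at hpoly
  obtain ⟨μ, hlow, hlast⟩ := exists_eq_C_mul_of_mul_linear_eq (natDegree_lowPoly_le t)
    (natDegree_lowPoly_le s) (by rwa [← linPoly_apply, Ne, linPoly_eq_zero_iff]) hpoly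
  refine ⟨μ, eq_of_lowPoly_eq ?_ hlast⟩
  rw [hlow, map_smul, smul_eq_C_mul]

theorem comap_clubMap_span_one_zero (hdeg : n + 2 ≤ (minpoly K lam).natDegree) :
    Submodule.comap (clubMap K n lam) ((L ∙ ((1 : L), (0 : L))).restrictScalars K) =
      LinearMap.ker (lastTwo K n) := by
  ext t
  rw [Submodule.mem_comap, Submodule.restrictScalars_mem, mem_span_one_zero_iff,
    clubMap_snd_eq_zero_iff hdeg, LinearMap.mem_ker]

theorem comap_clubMap_span_of_lastTwo_ne_zero (hdeg : n + 2 ≤ (minpoly K lam).natDegree)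
    {t : Fin (n + 2) → K} (ht : lastTwo K n t ≠ 0) :
    Submodule.comap (clubMap K n lam) ((L ∙ clubMap K n lam t).restrictScalars K) = K ∙ t := by
  ext s
  simp only [Submodule.mem_comap, Submodule.restrictScalars_mem, Submodule.mem_span_singleton]
  constructor
  · rintro ⟨c, hc⟩
    obtain ⟨μ, rfl⟩ := exists_eq_smul_of_clubMap_eq_smul hdeg ht hc.symm
    exact ⟨μ, rfl⟩
  · rintro ⟨μ, rfl⟩
    exact ⟨algebraMap K L μ, by rw [algebraMap_smul, map_smul]⟩

theorem projMap_clubMap_mk_eq_head_iff (hdeg : n + 2 ≤ (minpoly K lam).natDegree)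
    (t : Fin (n + 2) → K) (ht : t ≠ 0) :
    projMap (clubMap K n lam) (clubMap_injective hdeg) (mk K t ht) =
      mk L ((1 : L), (0 : L)) (by simp) ↔ lastTwo K n t = 0 := by
  rw [projMap_mk, mk_eq_mk_one_zero_iff, clubMap_snd_eq_zero_iff hdeg]

theorem weightOf_range_clubMap_head (hdeg : n + 2 ≤ (minpoly K lam).natDegree) :
    weightOf K L (LinearMap.range (clubMap K n lam)) (mk L ((1 : L), (0 : L)) (by simp)) =
      n := by
  rw [weightOf_range _ (clubMap_injective hdeg), submodule_mk, comap_clubMap_span_one_zero hdeg,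
    finrank_ker_lastTwo]

theorem weightOf_range_clubMap_of_lastTwo_ne_zero (hdeg : n + 2 ≤ (minpoly K lam).natDegree)
    {t : Fin (n + 2) → K} (ht : lastTwo K n t ≠ 0) (hft : clubMap K n lam t ≠ 0) :
    weightOf K L (LinearMap.range (clubMap K n lam)) (mk L (clubMap K n lam t) hft) = 1 := by
  rw [weightOf_range _ (clubMap_injective hdeg), submodule_mk,
    comap_clubMap_span_of_lastTwo_ne_zero hdeg ht, finrank_span_singleton]
  rintro rfl
  exact ht (map_zero _)

theorem injOn_projMap_clubMap (hdeg : n + 2 ≤ (minpoly K lam).natDegree) :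
    Set.InjOn (projMap (clubMap K n lam) (clubMap_injective hdeg))
      (pointsOf (LinearMap.ker (lastTwo K n)))ᶜ := by
  intro p hp q hq hpq
  induction p using Projectivization.ind with | h s hs => ?_
  induction q using Projectivization.ind with | h t ht => ?_
  rw [Set.mem_compl_iff, mk_mem_pointsOf_iff, LinearMap.mem_ker] at hq
  rw [projMap_mk, projMap_mk, mk_eq_mk_iff'] at hpq
  obtain ⟨c, hc⟩ := hpq
  obtain ⟨μ, rfl⟩ := exists_eq_smul_of_clubMap_eq_smul hdeg hq hc.symm
  exact (mk_eq_mk_iff' K _ _ _ _).mpr ⟨μ, rfl⟩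

theorem range_projMap_clubMap (hdeg : n + 2 ≤ (minpoly K lam).natDegree) (hn : 1 ≤ n) :
    Set.range (projMap (clubMap K n lam) (clubMap_injective hdeg)) =
      insert (mk L ((1 : L), (0 : L)) (by simp))
        (projMap (clubMap K n lam) (clubMap_injective hdeg) ''
          (pointsOf (LinearMap.ker (lastTwo K n)))ᶜ) := by
  ext P
  constructor
  · rintro ⟨p, rfl⟩
    induction p using Projectivization.ind with | h t ht => ?_
    by_cases htZ : lastTwo K n t = 0
    · exact Or.inl ((projMap_clubMap_mk_eq_head_iff hdeg t ht).mpr htZ)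
    · refine Or.inr ⟨mk K t ht, ?_, rfl⟩
      rwa [Set.mem_compl_iff, mk_mem_pointsOf_iff, LinearMap.mem_ker]
  · rintro (rfl | ⟨p, -, rfl⟩)
    · have he : (Pi.single 0 1 : Fin (n + 2) → K) ≠ 0 := by simp
      refine ⟨mk K _ he, (projMap_clubMap_mk_eq_head_iff hdeg _ he).mpr ?_⟩
      rw [lastTwo_apply, Pi.single_eq_of_ne Fin.last_pos.ne', Pi.single_eq_of_ne
        (Fin.ne_of_val_ne (by rw [Fin.val_castSucc, Fin.val_last, Fin.val_zero]; omega))]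
      rfl
    · exact ⟨p, rfl⟩

theorem head_notMem_image_projMap_clubMap (hdeg : n + 2 ≤ (minpoly K lam).natDegree) :
    mk L ((1 : L), (0 : L)) (by simp) ∉
      projMap (clubMap K n lam) (clubMap_injective hdeg) ''
        (pointsOf (LinearMap.ker (lastTwo K n)))ᶜ := by
  rintro ⟨p, hp, hP⟩
  induction p using Projectivization.ind with | h t ht => ?_
  rw [Set.mem_compl_iff, mk_mem_pointsOf_iff, LinearMap.mem_ker] at hp
  exact hp ((projMap_clubMap_mk_eq_head_iff hdeg t ht).mp hP)

theorem ncard_range_projMap_clubMap [Finite K] (hdeg : n + 2 ≤ (minpoly K lam).natDegree)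
    (hn : 1 ≤ n) :
    (Set.range (projMap (clubMap K n lam) (clubMap_injective hdeg))).ncard =
      Nat.card K ^ (n + 1) + Nat.card K ^ n + 1 := by
  rw [range_projMap_clubMap hdeg hn, Set.ncard_insert_of_notMem
    (head_notMem_image_projMap_clubMap hdeg), (injOn_projMap_clubMap hdeg).ncard_image]
  have hsplit := ncard_compl_pointsOf_add_card (LinearMap.ker (lastTwo K n))
  rw [card_of_finrank K _ finrank_ker_lastTwo, card_of_finrank K _ (finrank_fin_fun K),
    Finset.sum_range_succ, Finset.sum_range_succ] at hsplit
  omega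

end Club

/-- for `h ≥ 3` and `λ` generating a power basis of `F_{q^h}` over `F_q`,
the set `C = {(t₁λ + … + t_{h-1}λ^{h-1}, t_{h-1} + t_h λ) : (t₁,…,t_h) ≠ 0}` is an
`F_q`-linear set of rank `h` in which `(1,0)` has weight `h-2` and all other points
have weight `1`; consequently `|C| = q^{h-1} + q^{h-2} + 1`. -/
theorem stmt7 (K L : Type*) [Field K] [Field L] [Algebra K L] [Fintype K]
    (h : ℕ) (hh : 3 ≤ h)
    (lam : L) (b : Basis (Fin h) K L) (hb : ∀ i : Fin h, b i = lam ^ (i : ℕ))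
    (v : (Fin h → K) → L × L)
    (hv : ∀ t : Fin h → K, v t =
      (∑ i : Fin (h - 1), algebraMap K L (t (Fin.castLE (by omega) i)) * lam ^ ((i : ℕ) + 1),
        algebraMap K L (t ⟨h - 2, by omega⟩) + algebraMap K L (t ⟨h - 1, by omega⟩) * lam))
    (W : Submodule K (L × L)) (hW : W = Submodule.span K (Set.range v))
    (C : Set (Projectivization L (L × L)))
    (hC : C = {P | ∃ t : Fin h → K, t ≠ 0 ∧ ∃ hvt : v t ≠ 0, P = Projectivization.mk L (v t) hvt}) :
    Module.finrank K W = h ∧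
    linearSetOf K L W = C ∧
    weightOf K L W (Projectivization.mk L ((1 : L), (0 : L)) (by simp)) = h - 2 ∧
    (∀ P ∈ C, P ≠ Projectivization.mk L ((1 : L), (0 : L)) (by simp) →
      weightOf K L W P = 1) ∧
    C.ncard = Fintype.card K ^ (h - 1) + Fintype.card K ^ (h - 2) + 1 := by
  obtain ⟨n, rfl⟩ : ∃ n, h = n + 2 := ⟨h - 2, by omega⟩
  have hdeg : n + 2 ≤ (minpoly K lam).natDegree :=
    (PowerBasis.natDegree_minpoly ⟨lam, n + 2, b, hb⟩).ge
  obtain rfl : v = clubMap K n lam := funext fun t => by rw [hv, clubMap_apply_eq_sum]; rfl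
  have hinj := clubMap_injective hdeg
  obtain rfl : W = LinearMap.range (clubMap K n lam) := by
    rw [hW, ← LinearMap.coe_range, Submodule.span_eq]
  obtain rfl : C = Set.range (projMap (clubMap K n lam) hinj) := by
    ext P
    rw [hC, mem_range_projMap_iff]
    exact ⟨fun ⟨t, _, ht, hP⟩ => ⟨t, ht, hP⟩,
      fun ⟨t, ht, hP⟩ => ⟨t, fun h0 => ht (by rw [h0, map_zero]), ht, hP⟩⟩
  refine ⟨by rw [LinearMap.finrank_range_of_inj hinj, finrank_fin_fun], linearSetOf_range _ hinj,
    weightOf_range_clubMap_head hdeg, fun P hP hP0 => ?_, ?_⟩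
  · obtain ⟨t, ht, rfl⟩ := (mem_range_projMap_iff _ hinj P).mp hP
    refine weightOf_range_clubMap_of_lastTwo_ne_zero hdeg (fun h0 => hP0 ?_) ht
    rwa [mk_eq_mk_one_zero_iff, clubMap_snd_eq_zero_iff hdeg]
  · simpa [Nat.card_eq_fintype_card] using ncard_range_projMap_clubMap hdeg (by omega)
end
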